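/- arXiv:2603.18957 — 6 statements merged into one kernel-verified Lean document; each statement's English description precedes it below -/
import Mathlib

section
/- The map x ↦ −pen(x) is differentiable at every x ≠ 0 in ℝ^r, with gradient ∇(−pen)(x) = λ*(x) · x/‖x‖₂. -/
open Real Filter

/-- Unnormalized multivariate Laplace kernel `Ψ(x | λ) = λ^r exp(−λ‖x‖₂)` on `ℝ^r`. -/
noncomputable def Psi (r : ℕ) (lam : ℝ) (x : EuclideanSpace ℝ (Fin r)) : ℝ :=
  lam ^ r * Real.exp (-lam * ‖x‖)

/-- Slab posterior-inclusion weight `p*(x)`. -/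
noncomputable def pstar (r : ℕ) (lam0 lam1 th : ℝ) (x : EuclideanSpace ℝ (Fin r)) : ℝ :=
  th * Psi r lam1 x / ((1 - th) * Psi r lam0 x + th * Psi r lam1 x)

/-- Adaptive shrinkage weight `λ*(x) = λ₁ p*(x) + λ₀ (1 − p*(x))`. -/
noncomputable def lamstar (r : ℕ) (lam0 lam1 th : ℝ) (x : EuclideanSpace ℝ (Fin r)) : ℝ :=
  lam1 * pstar r lam0 lam1 th x + lam0 * (1 - pstar r lam0 lam1 th x)

/-- Centered SSGL penalty `pen(x) = −λ₁‖x‖₂ + log(p*(0)/p*(x))`. -/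
noncomputable def pen (r : ℕ) (lam0 lam1 th : ℝ) (x : EuclideanSpace ℝ (Fin r)) : ℝ :=
  -lam1 * ‖x‖ + Real.log (pstar r lam0 lam1 th 0 / pstar r lam0 lam1 th x)

section aux
variable {r : ℕ} {lam0 lam1 th : ℝ}

lemma Psi_pos {lam : ℝ} (h : 0 < lam) (x : EuclideanSpace ℝ (Fin r)) : 0 < Psi r lam x :=
  mul_pos (pow_pos h r) (Real.exp_pos _)

lemma denom_pos (hlam1 : 0 < lam1) (hlam : lam1 < lam0) (hth0 : 0 < th) (hth1 : th < 1)
    (x : EuclideanSpace ℝ (Fin r)) :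
    0 < (1 - th) * Psi r lam0 x + th * Psi r lam1 x :=
  add_pos (mul_pos (by linarith) (Psi_pos (hlam1.trans hlam) x))
    (mul_pos hth0 (Psi_pos hlam1 x))

lemma pstar_pos (hlam1 : 0 < lam1) (hlam : lam1 < lam0) (hth0 : 0 < th) (hth1 : th < 1)
    (x : EuclideanSpace ℝ (Fin r)) : 0 < pstar r lam0 lam1 th x :=
  div_pos (mul_pos hth0 (Psi_pos hlam1 x)) (denom_pos hlam1 hlam hth0 hth1 x)

/-- Gradient of the norm on a real inner product space at a nonzero point. -/
lemma hasFDerivAt_norm' {E : Type*} [NormedAddCommGroup E] [InnerProductSpace ℝ E]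
    {x : E} (hx : x ≠ 0) :
    HasFDerivAt (fun y : E => ‖y‖) (‖x‖⁻¹ • innerSL ℝ x) x := by
  have hx0 : (0:ℝ) < ‖x‖ := norm_pos_iff.mpr hx
  have h1 : HasFDerivAt (fun y : E => ‖y‖ ^ 2) (2 • innerSL ℝ x) x :=
    (hasStrictFDerivAt_norm_sq x).hasFDerivAt
  have h2 : HasDerivAt Real.sqrt (1 / (2 * Real.sqrt (‖x‖ ^ 2))) (‖x‖ ^ 2) :=
    Real.hasDerivAt_sqrt (by positivity)
  have h3 := h2.comp_hasFDerivAt x h1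
  have he : (fun y : E => Real.sqrt (‖y‖ ^ 2)) = fun y : E => ‖y‖ := by
    funext y; rw [Real.sqrt_sq (norm_nonneg y)]
  simp only [Function.comp_def] at h3
  rw [he] at h3
  refine h3.congr_fderiv ?_
  rw [Real.sqrt_sq (norm_nonneg x)]
  ext y
  simp [smul_smul]
  ring
end aux

/-- `x ↦ −pen(x)` is differentiable at every `x ≠ 0`, with gradient
`λ*(x) · x/‖x‖₂`. -/
theorem stmt_2 (r : ℕ) (hr : 1 ≤ r) (lam0 lam1 th : ℝ)
    (hlam1 : 0 < lam1) (hlam : lam1 < lam0) (hth0 : 0 < th) (hth1 : th < 1) :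
    ∀ x : EuclideanSpace ℝ (Fin r), x ≠ 0 →
      HasGradientAt (fun y => -(pen r lam0 lam1 th y))
        ((lamstar r lam0 lam1 th x / ‖x‖) • x) x := by
  intro x hx
  have hlam0 : 0 < lam0 := hlam1.trans hlam
  have hx0 : (0:ℝ) < ‖x‖ := norm_pos_iff.mpr hx
  set c : ℝ := Real.log th + r * Real.log lam1 - Real.log (pstar r lam0 lam1 th 0) with hc
  -- rewrite the function
  have hfun : (fun y => -(pen r lam0 lam1 th y)) = fun y : EuclideanSpace ℝ (Fin r) =>
      c - Real.log ((1 - th) * ((lam0:ℝ) ^ r * Real.exp (-lam0 * ‖y‖))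
        + th * ((lam1:ℝ) ^ r * Real.exp (-lam1 * ‖y‖))) := by
    funext y
    have hD := denom_pos hlam1 hlam hth0 hth1 y
    have hp0 := pstar_pos hlam1 hlam hth0 hth1 (0 : EuclideanSpace ℝ (Fin r))
    have hpy := pstar_pos hlam1 hlam hth0 hth1 y
    have hnum : (0:ℝ) < th * Psi r lam1 y := mul_pos hth0 (Psi_pos hlam1 y)
    rw [pen, Real.log_div hp0.ne' hpy.ne']
    rw [show pstar r lam0 lam1 th y = th * Psi r lam1 y / ((1 - th) * Psi r lam0 y + th * Psi r lam1 y) from rfl]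
    rw [Real.log_div hnum.ne' hD.ne', Real.log_mul hth0.ne' (Psi_pos hlam1 y).ne',
      Psi, Real.log_mul (pow_pos hlam1 r).ne' (Real.exp_pos _).ne', Real.log_exp,
      Real.log_pow]
    simp only [Psi, hc]
    ring
  rw [hfun]
  -- scalar function
  set D : ℝ → ℝ := fun t => (1 - th) * ((lam0:ℝ) ^ r * Real.exp (-lam0 * t))
    + th * ((lam1:ℝ) ^ r * Real.exp (-lam1 * t)) with hDdef
  have hDpos : ∀ t, 0 < D t := fun t =>
    add_pos (mul_pos (by linarith) (mul_pos (pow_pos hlam0 r) (Real.exp_pos _)))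
      (mul_pos hth0 (mul_pos (pow_pos hlam1 r) (Real.exp_pos _)))
  have hD' : HasDerivAt D (-((1 - th) * (lam0 ^ r * Real.exp (-lam0 * ‖x‖)) * lam0
      + th * (lam1 ^ r * Real.exp (-lam1 * ‖x‖)) * lam1)) ‖x‖ := by
    have h0 : HasDerivAt (fun t : ℝ => Real.exp (-lam0 * t)) (Real.exp (-lam0 * ‖x‖) * (-lam0)) ‖x‖ := by
      have := ((hasDerivAt_id ‖x‖).const_mul (-lam0)).exp
      simpa using this
    have h1 : HasDerivAt (fun t : ℝ => Real.exp (-lam1 * t)) (Real.exp (-lam1 * ‖x‖) * (-lam1)) ‖x‖ := by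
      have := ((hasDerivAt_id ‖x‖).const_mul (-lam1)).exp
      simpa using this
    have := (((h0.const_mul ((lam0:ℝ) ^ r)).const_mul (1 - th)).add
      ((h1.const_mul ((lam1:ℝ) ^ r)).const_mul th))
    refine this.congr_deriv ?_
    ring
  have hg : HasDerivAt (fun t => c - Real.log (D t)) (lamstar r lam0 lam1 th x) ‖x‖ := by
    have hlog := (hD'.log (hDpos ‖x‖).ne')
    have := hlog.const_sub c
    refine this.congr_deriv ?_
    have hDx : D ‖x‖ = (1 - th) * Psi r lam0 x + th * Psi r lam1 x := rfl
    rw [lamstar, pstar, hDx]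
    have hD2 : (0:ℝ) < (1 - th) * Psi r lam0 x + th * Psi r lam1 x :=
      denom_pos hlam1 hlam hth0 hth1 x
    field_simp
    simp only [Psi]
    ring
  have hnorm := hasFDerivAt_norm' (E := EuclideanSpace ℝ (Fin r)) hx
  have hcomp := hg.comp_hasFDerivAt x hnorm
  rw [hasGradientAt_iff_hasFDerivAt]
  have heq : (InnerProductSpace.toDual ℝ (EuclideanSpace ℝ (Fin r)))
      ((lamstar r lam0 lam1 th x / ‖x‖) • x)
      = lamstar r lam0 lam1 th x • ‖x‖⁻¹ • innerSL ℝ x := by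
    ext y
    simp only [InnerProductSpace.toDual_apply_apply, ContinuousLinearMap.coe_smul',
      Pi.smul_apply, innerSL_apply_apply, real_inner_smul_left, smul_eq_mul, div_eq_mul_inv]
    ring
  exact heq ▸ hcomp
end

section
/- The adaptive shrinkage weight λ*(x), viewed as a function of t = ‖x‖₂, is strictly decreasing on [0,∞); moreover λ₁ < λ*(x) < λ₀ for every x ∈ ℝ^r, and λ*(x) → λ₁ as ‖x‖₂ → ∞. Hence rows with larger Euclidean norm receive strictly less penalization, and rows with smaller norm receive strictly more. -/
open Real Filter

/-- The slab weight `p*` viewed as a function of the norm `t = ‖x‖₂`. -/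
noncomputable def pfun (r : ℕ) (lam0 lam1 th : ℝ) (t : ℝ) : ℝ :=
  th * lam1 ^ r * Real.exp (-lam1 * t) /
    ((1 - th) * lam0 ^ r * Real.exp (-lam0 * t) + th * lam1 ^ r * Real.exp (-lam1 * t))

/-- The adaptive shrinkage weight `λ*` viewed as a function of the norm `t = ‖x‖₂`. -/
noncomputable def lamfun (r : ℕ) (lam0 lam1 th : ℝ) (t : ℝ) : ℝ :=
  lam1 * pfun r lam0 lam1 th t + lam0 * (1 - pfun r lam0 lam1 th t)

/-- `λ*` is strictly decreasing as a function of `t = ‖x‖₂` on `[0,∞)`;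
moreover `λ₁ < λ*(x) < λ₀` for every `x`, and `λ*(x) → λ₁` as `‖x‖₂ → ∞`. -/
theorem stmt_4 (r : ℕ) (hr : 1 ≤ r) (lam0 lam1 th : ℝ)
    (hlam1 : 0 < lam1) (hlam : lam1 < lam0) (hth0 : 0 < th) (hth1 : th < 1) :
    (∀ x : EuclideanSpace ℝ (Fin r), lamstar r lam0 lam1 th x = lamfun r lam0 lam1 th ‖x‖) ∧
    StrictAntiOn (lamfun r lam0 lam1 th) (Set.Ici 0) ∧
    (∀ x : EuclideanSpace ℝ (Fin r),
      lam1 < lamstar r lam0 lam1 th x ∧ lamstar r lam0 lam1 th x < lam0) ∧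
    Tendsto (lamfun r lam0 lam1 th) atTop (nhds lam1) := by
  have hc : 0 < lam0 - lam1 := by linarith
  set a := th * lam1 ^ r with ha_def
  set b := (1 - th) * lam0 ^ r with hb_def
  have hth1' : 0 < 1 - th := by linarith
  have ha : 0 < a := mul_pos hth0 (pow_pos hlam1 r)
  have hb : 0 < b := mul_pos hth1' (pow_pos (lt_trans hlam1 hlam) r)
  -- pfun in closed form
  have hpfun : ∀ t : ℝ, pfun r lam0 lam1 th t
      = a / (b * Real.exp (-(lam0 - lam1) * t) + a) := by
    intro t
    have hE : Real.exp (-lam1 * t) * Real.exp (-(lam0 - lam1) * t)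
        = Real.exp (-lam0 * t) := by
      rw [← Real.exp_add]; ring_nf
    have hD1 : 0 < b * Real.exp (-lam0 * t) + a * Real.exp (-lam1 * t) := by positivity
    have hD2 : 0 < b * Real.exp (-(lam0 - lam1) * t) + a := by positivity
    unfold pfun
    rw [show th * lam1 ^ r * Real.exp (-lam1 * t) /
        ((1 - th) * lam0 ^ r * Real.exp (-lam0 * t) + th * lam1 ^ r * Real.exp (-lam1 * t))
        = a * Real.exp (-lam1 * t) / (b * Real.exp (-lam0 * t) + a * Real.exp (-lam1 * t)) by
      rw [ha_def, hb_def]]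
    rw [div_eq_div_iff hD1.ne' hD2.ne']
    linear_combination a * b * hE
  have hpfun_pos : ∀ t : ℝ, 0 < pfun r lam0 lam1 th t := by
    intro t; rw [hpfun t]; positivity
  have hpfun_lt : ∀ t : ℝ, pfun r lam0 lam1 th t < 1 := by
    intro t; rw [hpfun t]
    have hD2 : 0 < b * Real.exp (-(lam0 - lam1) * t) + a := by positivity
    rw [div_lt_one hD2]
    nlinarith [Real.exp_pos (-(lam0 - lam1) * t)]
  have hlf : ∀ t : ℝ, lamfun r lam0 lam1 th t
      = lam0 - (lam0 - lam1) * pfun r lam0 lam1 th t := by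
    intro t; unfold lamfun; ring
  have hmono : ∀ s t : ℝ, s < t → pfun r lam0 lam1 th s < pfun r lam0 lam1 th t := by
    intro s t hst
    rw [hpfun s, hpfun t]
    have hDt : 0 < b * Real.exp (-(lam0 - lam1) * t) + a := by positivity
    apply div_lt_div_of_pos_left ha hDt
    have : Real.exp (-(lam0 - lam1) * t) < Real.exp (-(lam0 - lam1) * s) := by
      apply Real.exp_lt_exp.mpr; nlinarith
    nlinarith
  refine ⟨?_, ?_, ?_, ?_⟩
  · intro x
    unfold lamstar lamfun pstar pfun Psi
    ring_nf
  · intro s _ t _ hst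
    rw [hlf s, hlf t]
    have := hmono s t hst
    nlinarith
  · intro x
    have hx : lamstar r lam0 lam1 th x = lamfun r lam0 lam1 th ‖x‖ := by
      unfold lamstar lamfun pstar pfun Psi; ring_nf
    rw [hx, hlf ‖x‖]
    constructor
    · nlinarith [hpfun_lt ‖x‖]
    · nlinarith [hpfun_pos ‖x‖]
  · have h1 : Tendsto (fun t : ℝ => Real.exp (-(lam0 - lam1) * t)) atTop (nhds 0) := by
      apply Real.tendsto_exp_atBot.comp
      exact Tendsto.const_mul_atTop_of_neg (by linarith : -(lam0-lam1) < 0) tendsto_id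
    have h2 : Tendsto (fun t : ℝ => a / (b * Real.exp (-(lam0 - lam1) * t) + a))
        atTop (nhds 1) := by
      have : Tendsto (fun t : ℝ => b * Real.exp (-(lam0 - lam1) * t) + a)
          atTop (nhds a) := by
        have := h1.const_mul b
        simpa using this.add_const a
      have h3 := Tendsto.div (tendsto_const_nhds (x := a)) this (ne_of_gt ha)
      rw [div_self (ne_of_gt ha)] at h3
      exact h3
    have h4 : Tendsto (fun t : ℝ => lam0 - (lam0 - lam1)
        * (a / (b * Real.exp (-(lam0 - lam1) * t) + a))) atTop (nhds lam1) := by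
      have := (h2.const_mul (lam0 - lam1)).const_sub lam0
      simpa using this
    refine h4.congr fun t => ?_
    rw [hlf t, hpfun t]
end

section
/- For every x ∈ ℝ^r, the centered SSGL penalty satisfies the two-sided bound −λ₀‖x‖₂ ≤ pen(x) ≤ −λ₁‖x‖₂, and pen(0) = 0. Consequently, for any η > 0 the threshold Δ = inf_{x≠0} ( ‖x‖₂/2 − η·pen(x)/‖x‖₂ ) satisfies Δ ≥ η λ₁ > 0. -/
open Real Filter

/-- The threshold `Δ = inf_{x ≠ 0} ( ‖x‖₂/2 − η·pen(x)/‖x‖₂ )`. -/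
noncomputable def Delta (r : ℕ) (lam0 lam1 th η : ℝ) : ℝ :=
  sInf {v : ℝ | ∃ x : EuclideanSpace ℝ (Fin r), x ≠ 0 ∧
    v = ‖x‖ / 2 - η * pen r lam0 lam1 th x / ‖x‖}

/-- two-sided bound `−λ₀‖x‖₂ ≤ pen(x) ≤ −λ₁‖x‖₂`, `pen(0) = 0`, and
consequently `Δ ≥ ηλ₁ > 0` for any `η > 0`. -/
theorem stmt_5 (r : ℕ) (hr : 1 ≤ r) (lam0 lam1 th : ℝ)
    (hlam1 : 0 < lam1) (hlam : lam1 < lam0) (hth0 : 0 < th) (hth1 : th < 1) :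
    (∀ x : EuclideanSpace ℝ (Fin r),
      -lam0 * ‖x‖ ≤ pen r lam0 lam1 th x ∧ pen r lam0 lam1 th x ≤ -lam1 * ‖x‖) ∧
    pen r lam0 lam1 th 0 = 0 ∧
    (∀ η : ℝ, 0 < η → η * lam1 ≤ Delta r lam0 lam1 th η ∧ 0 < η * lam1) := by
  have hlam0 : 0 < lam0 := hlam1.trans hlam
  set a := (1 - th) * lam0 ^ r with ha_def
  set b := th * lam1 ^ r with hb_def
  have ha : 0 < a := mul_pos (by linarith) (pow_pos hlam0 r)
  have hb : 0 < b := mul_pos hth0 (pow_pos hlam1 r)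
  have hab : 0 < a + b := by linarith
  have hpen : ∀ x : EuclideanSpace ℝ (Fin r),
      pen r lam0 lam1 th x =
        Real.log ((a * Real.exp (-lam0 * ‖x‖) + b * Real.exp (-lam1 * ‖x‖)) / (a + b)) := by
    intro x
    set t := ‖x‖ with ht_def
    set E0 := Real.exp (-lam0 * t) with hE0def
    set E1 := Real.exp (-lam1 * t) with hE1def
    have hE0 : 0 < E0 := Real.exp_pos _
    have hE1 : 0 < E1 := Real.exp_pos _
    have hD : 0 < a * E0 + b * E1 := by positivity
    have hp0 : pstar r lam0 lam1 th 0 = b / (a + b) := by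
      simp only [pstar, Psi, norm_zero, mul_zero, Real.exp_zero, mul_one, ha_def, hb_def]
    have hpx : pstar r lam0 lam1 th x = b * E1 / (a * E0 + b * E1) := by
      simp only [pstar, Psi, ha_def, hb_def, ← ht_def, hE0def, hE1def]
      ring_nf
    rw [pen, hp0, hpx, ← ht_def]
    have harg : (b / (a + b)) / (b * E1 / (a * E0 + b * E1))
        = (a * E0 + b * E1) / ((a + b) * E1) := by
      field_simp
    rw [harg, Real.log_div hD.ne' (by positivity),
        Real.log_mul hab.ne' hE1.ne', hE1def, Real.log_exp,
        Real.log_div hD.ne' hab.ne']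
    ring
  have hbounds : ∀ x : EuclideanSpace ℝ (Fin r),
      -lam0 * ‖x‖ ≤ pen r lam0 lam1 th x ∧ pen r lam0 lam1 th x ≤ -lam1 * ‖x‖ := by
    intro x
    set t := ‖x‖ with ht_def
    have ht : 0 ≤ t := norm_nonneg x
    have hE0 : (0:ℝ) < Real.exp (-lam0 * t) := Real.exp_pos _
    have hE1 : (0:ℝ) < Real.exp (-lam1 * t) := Real.exp_pos _
    have hEle : Real.exp (-lam0 * t) ≤ Real.exp (-lam1 * t) := by
      apply Real.exp_le_exp.mpr
      nlinarith
    have hD : 0 < a * Real.exp (-lam0 * t) + b * Real.exp (-lam1 * t) := by positivity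
    rw [hpen x, ← ht_def]
    constructor
    · have h1 : Real.exp (-lam0 * t) ≤
          (a * Real.exp (-lam0 * t) + b * Real.exp (-lam1 * t)) / (a + b) := by
        rw [le_div_iff₀ hab]
        nlinarith
      calc -lam0 * t = Real.log (Real.exp (-lam0 * t)) := (Real.log_exp _).symm
        _ ≤ _ := Real.log_le_log hE0 h1
    · have h1 : (a * Real.exp (-lam0 * t) + b * Real.exp (-lam1 * t)) / (a + b)
          ≤ Real.exp (-lam1 * t) := by
        rw [div_le_iff₀ hab]
        nlinarith
      calc Real.log ((a * Real.exp (-lam0 * t) + b * Real.exp (-lam1 * t)) / (a + b))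
          ≤ Real.log (Real.exp (-lam1 * t)) := Real.log_le_log (by positivity) h1
        _ = -lam1 * t := Real.log_exp _
  have hpen0 : pen r lam0 lam1 th 0 = 0 := by
    rw [hpen 0]
    simp [Real.log_div hab.ne' hab.ne']
  refine ⟨hbounds, hpen0, ?_⟩
  intro η hη
  refine ⟨?_, mul_pos hη hlam1⟩
  haveI : Nonempty (Fin r) := ⟨⟨0, hr⟩⟩
  obtain ⟨x0, hx0⟩ := exists_ne (0 : EuclideanSpace ℝ (Fin r))
  apply le_csInf
  · exact ⟨_, x0, hx0, rfl⟩
  · rintro v ⟨x, hx, rfl⟩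
    have ht : 0 < ‖x‖ := norm_pos_iff.mpr hx
    have hp := (hbounds x).2
    have h2 : η * pen r lam0 lam1 th x / ‖x‖ ≤ -(η * lam1) := by
      rw [div_le_iff₀ ht]
      nlinarith
    linarith
end

section
/- (Proposition 1, upper bound on the threshold.) Suppose λ₀ − λ₁ > 2/√η and g(0) > 0, where g(x) = (λ*(x) − λ₁)² + (2/η) log p*(x). Then Δ < Δ^U, where Δ^U = √( 2η log(1/p*(0)) ) + η λ₁. -/
open Real Filter

/-- `g(x) = (λ*(x) − λ₁)² + (2/η) log p*(x)`. -/
noncomputable def gfun (r : ℕ) (lam0 lam1 th η : ℝ) (x : EuclideanSpace ℝ (Fin r)) : ℝ :=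
  (lamstar r lam0 lam1 th x - lam1) ^ 2 + 2 / η * Real.log (pstar r lam0 lam1 th x)

/-- Proposition 1, upper bound on the threshold: if `λ₀ − λ₁ > 2/√η` and
`g(0) > 0`, then `Δ < Δ^U = √(2η log(1/p*(0))) + ηλ₁`. -/
theorem stmt_8 (r : ℕ) (hr : 1 ≤ r) (lam0 lam1 th : ℝ)
    (hlam1 : 0 < lam1) (hlam : lam1 < lam0) (hth0 : 0 < th) (hth1 : th < 1)
    (η : ℝ) (hη : 0 < η)
    (hgap : lam0 - lam1 > 2 / Real.sqrt η)
    (hg0 : gfun r lam0 lam1 th η 0 > 0) :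
    Delta r lam0 lam1 th η <
      Real.sqrt (2 * η * Real.log (1 / pstar r lam0 lam1 th 0)) + η * lam1 := by
  set P : EuclideanSpace ℝ (Fin r) → ℝ := pstar r lam0 lam1 th with hP
  have hlam0 : 0 < lam0 := hlam1.trans hlam
  have hPsi : ∀ (lam : ℝ), 0 < lam → ∀ x : EuclideanSpace ℝ (Fin r), 0 < Psi r lam x := by
    intro lam hl x; unfold Psi; positivity
  have hfacts : ∀ x : EuclideanSpace ℝ (Fin r), 0 < P x ∧ P x < 1 := by
    intro x
    have h0 := hPsi lam0 hlam0 x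
    have h1 := hPsi lam1 hlam1 x
    have hb : 0 < (1 - th) * Psi r lam0 x := mul_pos (by linarith) h0
    have hn : 0 < th * Psi r lam1 x := mul_pos hth0 h1
    have hd : 0 < (1 - th) * Psi r lam0 x + th * Psi r lam1 x := by linarith
    constructor
    · exact div_pos hn hd
    · rw [hP]; unfold pstar
      rw [div_lt_one hd]; linarith
  have hPpos : ∀ x, 0 < P x := fun x => (hfacts x).1
  have hPlt : ∀ x, P x < 1 := fun x => (hfacts x).2
  set L := Real.log (1 / P 0) with hL
  have hlogP0 : Real.log (P 0) = -L := by rw [hL, one_div, Real.log_inv]; ring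
  have hLpos : 0 < L := by
    have := Real.log_neg (hPpos 0) (hPlt 0)
    linarith [hlogP0]
  set t := Real.sqrt (2 * η * L) with htdef
  have ht : 0 < t := Real.sqrt_pos.mpr (by positivity)
  have htsq : t ^ 2 = 2 * η * L := Real.sq_sqrt (by positivity)
  set x : EuclideanSpace ℝ (Fin r) := t • (EuclideanSpace.single (⟨0, by omega⟩ : Fin r) (1:ℝ)) with hx
  have hnormx : ‖x‖ = t := by
    rw [hx, norm_smul, EuclideanSpace.norm_single]
    simp [abs_of_pos ht]
  have hxne : x ≠ 0 := by
    intro h; rw [h, norm_zero] at hnormx; linarith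
  have hq : Real.log (P x) < 0 := Real.log_neg (hPpos x) (hPlt x)
  have hpen : pen r lam0 lam1 th x = -lam1 * t + (-L - Real.log (P x)) := by
    unfold pen
    rw [hnormx, Real.log_div (ne_of_gt (hPpos 0)) (ne_of_gt (hPpos x)), hlogP0]
  have hv : ‖x‖ / 2 - η * pen r lam0 lam1 th x / ‖x‖ < t + η * lam1 := by
    rw [hnormx, hpen]
    have h1 : η * (-lam1 * t + (-L - Real.log (P x))) / t
        = -(η * lam1) - t / 2 - η * Real.log (P x) / t := by
      field_simp
      nlinarith [htsq]
    rw [h1]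
    have h2 : η * Real.log (P x) / t < 0 :=
      div_neg_of_neg_of_pos (by nlinarith) ht
    linarith
  have hRHS : t + η * lam1 = Real.sqrt (2 * η * Real.log (1 / pstar r lam0 lam1 th 0)) + η * lam1 := by
    rw [htdef, hL, hP]
  by_cases hbdd : BddBelow {v : ℝ | ∃ x : EuclideanSpace ℝ (Fin r), x ≠ 0 ∧
      v = ‖x‖ / 2 - η * pen r lam0 lam1 th x / ‖x‖}
  · calc Delta r lam0 lam1 th η ≤ ‖x‖ / 2 - η * pen r lam0 lam1 th x / ‖x‖ :=
          csInf_le hbdd ⟨x, hxne, rfl⟩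
      _ < t + η * lam1 := hv
      _ = _ := hRHS
  · rw [Delta, Real.sInf_of_not_bddBelow hbdd]
    have := Real.sqrt_nonneg (2 * η * Real.log (1 / pstar r lam0 lam1 th 0))
    nlinarith
end

section
/- (Limit of the conditional sparsity weight as the spike parameter diverges.) Fix α > 0, β > 0, λ₁ > 0, an integer r ≥ 1, and vectors a₁, …, a_{d₁} ∈ ℝ^r; let q = #{k : a_k ≠ 0}. For λ₀ > 0 define the posterior mean m(λ₀) = [∫₀¹ θ^{α} (1−θ)^{β−1} ∏_{k=1}^{d₁} ((1−θ) λ₀^r e^{−λ₀‖a_k‖₂} + θ λ₁^r e^{−λ₁‖a_k‖₂}) dθ] / [∫₀¹ θ^{α−1} (1−θ)^{β−1} ∏_{k=1}^{d₁} ((1−θ) λ₀^r e^{−λ₀‖a_k‖₂} + θ λ₁^r e^{−λ₁‖a_k‖₂}) dθ]. Then m(λ₀) → (α + q)/(α + β + d₁) as λ₀ → ∞. -/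
open Real Filter MeasureTheory

lemma rbeta_eq {u v : ℝ} (hu : 0 < u) (hv : 0 < v) :
    ((∫ x in (0:ℝ)..1, x ^ (u-1) * (1-x) ^ (v-1) : ℝ) : ℂ) = Complex.betaIntegral u v := by
  rw [Complex.betaIntegral, ← intervalIntegral.integral_ofReal]
  apply intervalIntegral.integral_congr
  intro x hx
  rw [Set.uIcc_of_le (by norm_num : (0:ℝ) ≤ 1)] at hx
  push_cast
  rw [Complex.ofReal_cpow hx.1, Complex.ofReal_cpow (by linarith [hx.2])]
  push_cast
  ring

lemma rbeta_integrable {u v : ℝ} (hu : 0 < u) (hv : 0 < v) :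
    IntervalIntegrable (fun x => x ^ (u-1) * (1-x) ^ (v-1)) volume (0:ℝ) 1 := by
  have h := Complex.betaIntegral_convergent (u := u) (v := v) (by simpa) (by simpa)
  rw [intervalIntegrable_iff] at h ⊢
  have h2 := h.re
  apply h2.congr
  rw [Filter.eventuallyEq_iff_exists_mem]
  refine ⟨Set.uIoc 0 1, self_mem_ae_restrict measurableSet_uIoc, fun x hx => ?_⟩
  rw [Set.uIoc_of_le (by norm_num : (0:ℝ) ≤ 1)] at hx
  simp only
  rw [show ((u:ℂ)-1) = ((u-1:ℝ):ℂ) by push_cast; ring,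
    show ((v:ℂ)-1) = ((v-1:ℝ):ℂ) by push_cast; ring,
    show (1 - (x:ℂ)) = ((1-x:ℝ):ℂ) by push_cast; ring,
    ← Complex.ofReal_cpow hx.1.le, ← Complex.ofReal_cpow (by linarith [hx.2]),
    ← Complex.ofReal_mul]
  simp

lemma rbeta_gamma {u v : ℝ} (hu : 0 < u) (hv : 0 < v) :
    Real.Gamma u * Real.Gamma v
      = Real.Gamma (u+v) * ∫ x in (0:ℝ)..1, x ^ (u-1) * (1-x) ^ (v-1) := by
  have := Complex.Gamma_mul_Gamma_eq_betaIntegral (s := u) (t := v) (by simpa) (by simpa)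
  rw [← rbeta_eq hu hv, ← Complex.ofReal_add, Complex.Gamma_ofReal, Complex.Gamma_ofReal,
    Complex.Gamma_ofReal, ← Complex.ofReal_mul, ← Complex.ofReal_mul] at this
  exact_mod_cast this

lemma rbeta_pos {u v : ℝ} (hu : 0 < u) (hv : 0 < v) :
    0 < ∫ x in (0:ℝ)..1, x ^ (u-1) * (1-x) ^ (v-1) := by
  have h := rbeta_gamma hu hv
  have h1 := Real.Gamma_pos_of_pos hu
  have h2 := Real.Gamma_pos_of_pos hv
  have h3 := Real.Gamma_pos_of_pos (by linarith : 0 < u + v)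
  nlinarith [mul_pos h1 h2]

lemma rbeta_succ {u v : ℝ} (hu : 0 < u) (hv : 0 < v) :
    ∫ x in (0:ℝ)..1, x ^ (u+1-1) * (1-x) ^ (v-1)
      = (u / (u + v)) * ∫ x in (0:ℝ)..1, x ^ (u-1) * (1-x) ^ (v-1) := by
  have h1 := rbeta_gamma (by linarith : (0:ℝ) < u + 1) hv
  have h2 := rbeta_gamma hu hv
  rw [Real.Gamma_add_one hu.ne'] at h1
  have e : u + 1 + v = (u + v) + 1 := by ring
  rw [e, Real.Gamma_add_one (by positivity)] at h1
  have h3 := Real.Gamma_pos_of_pos (by linarith : 0 < u + v)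
  rw [show u+1-1 = u by ring] at h1 ⊢
  have key : (u+v) * Gamma (u+v) * (∫ x in (0:ℝ)..1, x ^ u * (1-x) ^ (v-1))
      = u * (Gamma (u+v) * ∫ x in (0:ℝ)..1, x ^ (u-1) * (1-x) ^ (v-1)) := by
    rw [← h2]; linear_combination -h1
  have key2 : (u+v) * (∫ x in (0:ℝ)..1, x ^ u * (1-x) ^ (v-1))
      = u * ∫ x in (0:ℝ)..1, x ^ (u-1) * (1-x) ^ (v-1) :=
    mul_left_cancel₀ h3.ne' (by linear_combination key)
  have huv : u + v ≠ 0 := by positivity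
  field_simp
  linear_combination key2

lemma aux_bound (r : ℕ) {c : ℝ} (hc : 0 < c) {x : ℝ} (hx : 0 ≤ x) :
    x ^ r * Real.exp (-(c * x)) ≤ (r.factorial : ℝ) / c ^ r := by
  have h1 : (c*x)^r / (r.factorial : ℝ) ≤ Real.exp (c*x) := by
    calc (c*x)^r / (r.factorial : ℝ)
        ≤ ∑ i ∈ Finset.range (r+1), (c*x)^i / (i.factorial : ℝ) :=
          Finset.single_le_sum (f := fun i => (c*x)^i / (i.factorial : ℝ))
            (fun i _ => by positivity) (Finset.self_mem_range_succ r)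
      _ ≤ Real.exp (c*x) := Real.sum_le_exp_of_nonneg (by positivity) _
  have h2 : (c*x)^r ≤ Real.exp (c*x) * (r.factorial : ℝ) :=
    (div_le_iff₀ (by positivity)).mp h1
  rw [Real.exp_neg, ← div_eq_mul_inv, div_le_div_iff₀ (Real.exp_pos _) (pow_pos hc r)]
  calc x ^ r * c ^ r = (c*x)^r := by rw [mul_pow]; ring
    _ ≤ Real.exp (c*x) * (r.factorial:ℝ) := h2
    _ = (r.factorial:ℝ) * Real.exp (c*x) := mul_comm _ _

lemma tendsto_aux (r : ℕ) {c : ℝ} (hc : 0 < c) :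
    Tendsto (fun L : ℝ => L ^ r * Real.exp (-(c * L))) atTop (nhds 0) := by
  have h1 : Tendsto (fun L : ℝ => (c*L)^r * Real.exp (-(c*L))) atTop (nhds 0) :=
    (tendsto_pow_mul_exp_neg_atTop_nhds_zero r).comp (Filter.tendsto_id.const_mul_atTop hc)
  have h2 := h1.const_mul ((c ^ r)⁻¹)
  rw [mul_zero] at h2
  refine h2.congr (fun L => ?_)
  rw [mul_pow]
  field_simp

open scoped Classical in
lemma key_tendsto (r d₁ : ℕ) (hr : 1 ≤ r) (β lam1 : ℝ) (hβ : 0 < β) (hlam1 : 0 < lam1)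
    (a : Fin d₁ → EuclideanSpace ℝ (Fin r)) (γ : ℝ) (hγ : 0 < γ) :
    Tendsto (fun L : ℝ => ∫ θ in (0:ℝ)..1, θ ^ (γ-1) * (1-θ) ^ (β-1) *
        ∏ k, (if a k = 0 then (1-θ) + θ * (lam1/L)^r
              else (1-θ) * L^r * Real.exp (-L*‖a k‖) + θ * lam1^r * Real.exp (-lam1*‖a k‖)))
      atTop (nhds (∫ θ in (0:ℝ)..1, θ ^ (γ-1) * (1-θ) ^ (β-1) *
        ∏ k, (if a k = 0 then (1-θ) else θ * lam1^r * Real.exp (-lam1*‖a k‖)))) := by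
  set C : ℝ := ∏ k, (if a k = 0 then 2 else ((r.factorial : ℝ)/‖a k‖^r + lam1^r)) with hC
  apply intervalIntegral.tendsto_integral_filter_of_dominated_convergence
    (bound := fun θ => C * (θ ^ (γ-1) * (1-θ) ^ (β-1)))
  · -- measurability
    filter_upwards with L
    rw [Set.uIoc_of_le (by norm_num : (0:ℝ) ≤ 1),
      ← Measure.restrict_congr_set (Ioo_ae_eq_Ioc (a := (0:ℝ)) (b := 1))]
    apply ContinuousOn.aestronglyMeasurable _ measurableSet_Ioo
    apply ContinuousOn.mul
    · apply ContinuousOn.mul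
      · intro θ hθ
        exact (Real.continuousAt_rpow_const θ _ (Or.inl hθ.1.ne')).continuousWithinAt
      · intro θ hθ
        have h2 := hθ.2
        have : (1:ℝ) - θ ≠ 0 := by
          intro hcontra
          have := sub_eq_zero.mp hcontra
          linarith
        exact (((Real.continuousAt_rpow_const (1-θ) _ (Or.inl this)).comp
          (by fun_prop : Continuous fun θ : ℝ => 1 - θ).continuousAt)).continuousWithinAt
    · apply Continuous.continuousOn
      apply continuous_finset_prod
      intro k _
      by_cases h : a k = 0
      · simp only [if_pos h]; fun_prop
      · simp only [if_neg h]; fun_prop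
  · -- bound
    filter_upwards [Filter.eventually_ge_atTop (max 1 lam1)] with L hL
    filter_upwards with θ hθ
    rw [Set.uIoc_of_le (by norm_num : (0:ℝ) ≤ 1)] at hθ
    have hθ0 : 0 < θ := hθ.1
    have hθ1 : θ ≤ 1 := hθ.2
    have hL1 : (1:ℝ) ≤ L := le_trans (le_max_left _ _) hL
    have hL0 : (0:ℝ) < L := by linarith
    have h1 : 0 ≤ θ ^ (γ-1) := Real.rpow_nonneg hθ0.le _
    have h2 : 0 ≤ (1-θ) ^ (β-1) := Real.rpow_nonneg (by linarith) _
    have h1θ : (0:ℝ) ≤ 1 - θ := by linarith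
    have hGnn : ∀ k : Fin d₁, 0 ≤ (if a k = 0 then (1-θ) + θ * (lam1/L)^r
        else (1-θ) * L^r * Real.exp (-L*‖a k‖) + θ * lam1^r * Real.exp (-lam1*‖a k‖)) := by
      intro k
      by_cases h : a k = 0
      · simp only [if_pos h]
        have := mul_nonneg hθ0.le (pow_nonneg (div_nonneg hlam1.le hL0.le) r)
        linarith
      · simp only [if_neg h]
        have e1 := mul_nonneg (mul_nonneg h1θ (pow_nonneg hL0.le r)) (Real.exp_pos (-L*‖a k‖)).le
        have e2 := mul_nonneg (mul_nonneg hθ0.le (pow_pos hlam1 r).le)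
          (Real.exp_pos (-lam1*‖a k‖)).le
        linarith
    have hprod : (0:ℝ) ≤ ∏ k, (if a k = 0 then (1-θ) + θ * (lam1/L)^r
        else (1-θ) * L^r * Real.exp (-L*‖a k‖) + θ * lam1^r * Real.exp (-lam1*‖a k‖)) :=
      Finset.prod_nonneg fun k _ => hGnn k
    rw [Real.norm_eq_abs, abs_of_nonneg (by positivity)]
    rw [mul_comm C _]
    apply mul_le_mul_of_nonneg_left ?_ (by positivity)
    rw [hC]
    apply Finset.prod_le_prod (fun k _ => hGnn k)
    intro k _
    by_cases h : a k = 0 <;> [skip; skip] <;> [simp only [if_pos h]; simp only [if_neg h]]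
    · have hlL : lam1 / L ≤ 1 := by
        rw [div_le_one hL0]; exact le_trans (le_max_right _ _) hL
      have h3 : (lam1/L)^r ≤ 1 := pow_le_one₀ (by positivity) hlL
      nlinarith
    · have hn : 0 < ‖a k‖ := norm_pos_iff.mpr h
      have hb := aux_bound r hn hL0.le
      have hexp : Real.exp (-lam1*‖a k‖) ≤ 1 := by
        rw [Real.exp_le_one_iff]; nlinarith
      have hX : L^r * Real.exp (-L*‖a k‖) ≤ (r.factorial : ℝ)/‖a k‖^r := by
        rw [show -L*‖a k‖ = -(‖a k‖*L) by ring]; exact hb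
      have e1 : (1-θ) * L^r * Real.exp (-L*‖a k‖) ≤ (r.factorial : ℝ)/‖a k‖^r := by
        calc (1-θ) * L^r * Real.exp (-L*‖a k‖) = (1-θ) * (L^r * Real.exp (-L*‖a k‖)) := by ring
          _ ≤ 1 * ((r.factorial : ℝ)/‖a k‖^r) :=
            mul_le_mul (by linarith) hX (by positivity) one_pos.le
          _ = (r.factorial : ℝ)/‖a k‖^r := one_mul _
      have e2 : θ * lam1^r * Real.exp (-lam1*‖a k‖) ≤ lam1^r := by
        calc θ * lam1^r * Real.exp (-lam1*‖a k‖) ≤ (1 * lam1^r) * 1 :=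
            mul_le_mul (mul_le_mul hθ1 le_rfl (pow_pos hlam1 r).le one_pos.le) hexp
              (Real.exp_pos _).le (by positivity)
          _ = lam1^r := by ring
      linarith
  · -- bound integrable
    exact (rbeta_integrable hγ hβ).const_mul C
  · -- pointwise limit
    filter_upwards with θ hθ
    apply Tendsto.mul tendsto_const_nhds
    apply tendsto_finset_prod
    intro k _
    by_cases h : a k = 0 <;> [simp only [if_pos h]; simp only [if_neg h]]
    · have hr0 : Tendsto (fun L : ℝ => (lam1/L)^r) atTop (nhds 0) := by
        have h0 : Tendsto (fun L : ℝ => lam1/L) atTop (nhds 0) := by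
          simpa [div_eq_mul_inv] using tendsto_inv_atTop_zero.const_mul lam1
        simpa [zero_pow (by omega : r ≠ 0)] using h0.pow r
      have h2 := (hr0.const_mul θ).const_add (1-θ)
      simpa using h2
    · have hn : 0 < ‖a k‖ := norm_pos_iff.mpr h
      have h0 : Tendsto (fun L : ℝ => L^r * Real.exp (-(‖a k‖ * L))) atTop (nhds 0) :=
        tendsto_aux r hn
      have h1 : Tendsto (fun L : ℝ => (1-θ) * L^r * Real.exp (-L*‖a k‖)) atTop (nhds 0) := by
        have h2 := h0.const_mul (1-θ)
        rw [mul_zero] at h2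
        refine h2.congr fun L => ?_
        rw [show -L*‖a k‖ = -(‖a k‖*L) by ring]; ring
      have h2 := h1.const_add (θ * lam1^r * Real.exp (-lam1*‖a k‖))
      rw [add_zero] at h2
      refine h2.congr fun L => by ring

open scoped Classical in
/-- limit of the conditional sparsity weight as the spike parameter
diverges: the posterior mean of the mixing proportion `θ` under a `Beta(α,β)` prior and
the SSGL likelihood for rows `a₁, …, a_{d₁}` tends to `(α + q)/(α + β + d₁)` as
`λ₀ → ∞`, where `q = #{k : a_k ≠ 0}`. -/
theorem stmt_16 (r d₁ : ℕ) (hr : 1 ≤ r) (α β lam1 : ℝ)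
    (hα : 0 < α) (hβ : 0 < β) (hlam1 : 0 < lam1)
    (a : Fin d₁ → EuclideanSpace ℝ (Fin r)) :
    let q : ℕ := Nat.card {k : Fin d₁ // a k ≠ 0}
    let m : ℝ → ℝ := fun lam0 =>
      (∫ θ in (0:ℝ)..1, θ ^ α * (1 - θ) ^ (β - 1) *
          ∏ k, ((1 - θ) * lam0 ^ r * Real.exp (-lam0 * ‖a k‖) +
            θ * lam1 ^ r * Real.exp (-lam1 * ‖a k‖))) /
      (∫ θ in (0:ℝ)..1, θ ^ (α - 1) * (1 - θ) ^ (β - 1) *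
          ∏ k, ((1 - θ) * lam0 ^ r * Real.exp (-lam0 * ‖a k‖) +
            θ * lam1 ^ r * Real.exp (-lam1 * ‖a k‖)))
    Tendsto m atTop (nhds ((α + q) / (α + β + d₁))) := by
  intro q m
  set S : Finset (Fin d₁) := Finset.univ.filter (fun k => a k = 0) with hS
  set s : ℕ := S.card with hs
  have hq : q = (Finset.univ.filter (fun k => ¬ a k = 0)).card := by
    simp only [q, Nat.card_eq_fintype_card, Fintype.card_subtype]
  have hqs : s + q = d₁ := by
    rw [hq, hs, hS, Finset.card_filter_add_card_filter_not, Finset.card_univ,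
      Fintype.card_fin]
  -- notation for the G-integrals
  set G : ℝ → ℝ → ℝ := fun L θ =>
    ∏ k, (if a k = 0 then (1-θ) + θ * (lam1/L)^r
          else (1-θ) * L^r * Real.exp (-L*‖a k‖) + θ * lam1^r * Real.exp (-lam1*‖a k‖))
    with hG
  set Cp : ℝ := ∏ k ∈ Finset.univ.filter (fun k => ¬ a k = 0),
    (lam1^r * Real.exp (-lam1 * ‖a k‖)) with hCp
  have hCp0 : 0 < Cp := Finset.prod_pos fun k _ => by positivity
  set u : ℝ := α + q with hu
  set v : ℝ := β + s with hv
  have hu0 : 0 < u := by positivity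
  have hv0 : 0 < v := by positivity
  set Bb : ℝ := ∫ θ in (0:ℝ)..1, θ^(u-1)*(1-θ)^(v-1) with hBb
  have hBb0 : 0 < Bb := rbeta_pos hu0 hv0
  -- identity for the limit integrals
  have hlim_id : ∀ γ : ℝ, 0 < γ →
      (∫ θ in (0:ℝ)..1, θ ^ (γ-1) * (1-θ) ^ (β-1) *
        ∏ k, (if a k = 0 then (1-θ) else θ * lam1^r * Real.exp (-lam1*‖a k‖)))
      = Cp * ∫ θ in (0:ℝ)..1, θ^((γ+q)-1)*(1-θ)^(v-1) := by
    intro γ hγ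
    rw [← intervalIntegral.integral_const_mul]
    apply intervalIntegral.integral_congr_ae
    have hne : ∀ᵐ θ : ℝ, θ ≠ 1 := by
      rw [MeasureTheory.ae_iff]
      convert Real.volume_singleton (a := 1) using 2
      ext θ; simp
    filter_upwards [hne] with θ hθne hmem
    rw [Set.uIoc_of_le (by norm_num : (0:ℝ) ≤ 1)] at hmem
    have hθ0 : 0 < θ := hmem.1
    have hθ1 : θ < 1 := lt_of_le_of_ne hmem.2 hθne
    have h1θ : 0 < 1 - θ := by linarith
    have hsplit : (∏ k, (if a k = 0 then (1-θ) else θ * lam1^r * Real.exp (-lam1*‖a k‖)))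
        = (1-θ)^s * (θ^q * Cp) := by
      rw [Finset.prod_ite]
      congr 1
      · rw [Finset.prod_const, hs, hS]
      · rw [hCp]
        simp_rw [mul_assoc]
        rw [Finset.prod_mul_distrib, Finset.prod_const, hq]
    rw [hsplit]
    have e1 : θ^((γ+(q:ℝ))-1) = θ^(γ-1) * θ^q := by
      rw [show (γ+(q:ℝ))-1 = (γ-1)+(q:ℝ) by ring, Real.rpow_add hθ0, Real.rpow_natCast]
    have e2 : (1-θ)^(v-1) = (1-θ)^(β-1)*(1-θ)^s := by
      rw [hv, show (β+(s:ℝ))-1 = (β-1)+(s:ℝ) by ring, Real.rpow_add h1θ, Real.rpow_natCast]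
    rw [e1, e2]
    ring
  -- limits of the normalized integrals
  have hN := key_tendsto r d₁ hr β lam1 hβ hlam1 a (α+1) (by linarith)
  have hD := key_tendsto r d₁ hr β lam1 hβ hlam1 a α hα
  rw [hlim_id (α+1) (by linarith),
    show ((α+1)+(q:ℝ))-1 = u+1-1 by rw [hu]; ring, rbeta_succ hu0 hv0, ← hBb] at hN
  rw [hlim_id α hα, show (α+(q:ℝ))-1 = u-1 by rw [hu], ← hBb] at hD
  have hDne : Cp * Bb ≠ 0 := by positivity
  have hdiv := hN.div hD hDne
  have hval : (Cp * (u/(u+v) * Bb)) / (Cp * Bb) = (α + q) / (α + β + d₁) := by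
    have huv : u + v = α + β + (d₁:ℝ) := by
      rw [hu, hv]
      have : ((s:ℝ) + q) = (d₁:ℝ) := by exact_mod_cast congrArg (Nat.cast : ℕ → ℝ) hqs
      linarith
    rw [show Cp*(u/(u+v)*Bb) = (u/(u+v))*(Cp*Bb) by ring, mul_div_assoc, div_self hDne,
      mul_one, huv, hu]
  rw [hval] at hdiv
  refine Tendsto.congr' ?_ hdiv
  filter_upwards [Filter.eventually_gt_atTop (0:ℝ)] with L hL0
  have hrs : (L:ℝ)^(r*s) ≠ 0 := by positivity
  have hFG : ∀ θ : ℝ,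
      (∏ k, ((1-θ)*L^r*Real.exp (-L*‖a k‖) + θ*lam1^r*Real.exp (-lam1*‖a k‖)))
        = L^(r*s) * G L θ := by
    intro θ
    have hpow : (L:ℝ)^(r*s) = ∏ k, (if a k = 0 then L^r else (1:ℝ)) := by
      rw [← Finset.prod_filter, Finset.prod_const, ← hS, ← hs, ← pow_mul]
    rw [hG]
    simp only
    rw [hpow, ← Finset.prod_mul_distrib]
    apply Finset.prod_congr rfl
    intro k _
    by_cases h : a k = 0
    · rw [if_pos h, if_pos h, h, norm_zero, mul_zero, Real.exp_zero]
      rw [div_pow]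
      field_simp
      simp
    · rw [if_neg h, if_neg h, one_mul]
  have e3 : (∫ θ in (0:ℝ)..1, θ ^ α * (1 - θ) ^ (β - 1) *
        ∏ k, ((1 - θ) * L ^ r * Real.exp (-L * ‖a k‖) + θ * lam1 ^ r * Real.exp (-lam1 * ‖a k‖)))
      = L^(r*s) * ∫ θ in (0:ℝ)..1, θ ^ ((α+1)-1) * (1-θ) ^ (β-1) * G L θ := by
    rw [← intervalIntegral.integral_const_mul]
    apply intervalIntegral.integral_congr
    intro θ _
    simp only [show α+1-1 = α by ring, hFG]
    ring
  have e4 : (∫ θ in (0:ℝ)..1, θ ^ (α-1) * (1 - θ) ^ (β - 1) *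
        ∏ k, ((1 - θ) * L ^ r * Real.exp (-L * ‖a k‖) + θ * lam1 ^ r * Real.exp (-lam1 * ‖a k‖)))
      = L^(r*s) * ∫ θ in (0:ℝ)..1, θ ^ (α-1) * (1-θ) ^ (β-1) * G L θ := by
    rw [← intervalIntegral.integral_const_mul]
    apply intervalIntegral.integral_congr
    intro θ _
    simp only [hFG]
    ring
  show _ = m L
  simp only [m, Pi.div_apply]
  rw [e3, e4, mul_div_mul_left _ _ hrs]
end

section
/- (Strict separation of proximal objective values below the threshold, converse direction.) If z ∈ ℝ^r satisfies ‖z‖₂ > Δ, then there exists x ∈ ℝ^r with x ≠ 0 and F(x) < F(0); i.e., 0 is not a global minimizer of the proximal objective F. -/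
open Real Filter

/-- The proximal objective `F(x) = (1/(2η))‖x − z‖₂² − pen(x)`. -/
noncomputable def Fobj (r : ℕ) (lam0 lam1 th η : ℝ)
    (z x : EuclideanSpace ℝ (Fin r)) : ℝ :=
  1 / (2 * η) * ‖x - z‖ ^ 2 - pen r lam0 lam1 th x

lemma pen_congr (r : ℕ) (lam0 lam1 th : ℝ) {x y : EuclideanSpace ℝ (Fin r)}
    (h : ‖x‖ = ‖y‖) : pen r lam0 lam1 th x = pen r lam0 lam1 th y := by
  unfold pen pstar Psi; rw [h]

lemma pen_zero (r : ℕ) (lam0 lam1 th : ℝ) (hlam1 : 0 < lam1) (hlam : lam1 < lam0)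
    (hth0 : 0 < th) (hth1 : th < 1) : pen r lam0 lam1 th 0 = 0 := by
  have hlam0 : 0 < lam0 := hlam1.trans hlam
  have hp : 0 < pstar r lam0 lam1 th 0 := by
    unfold pstar Psi
    have h1 : 0 < th * (lam1 ^ r * Real.exp (-lam1 * ‖(0:EuclideanSpace ℝ (Fin r))‖)) := by
      positivity
    have h0 : 0 < (1 - th) * (lam0 ^ r * Real.exp (-lam0 * ‖(0:EuclideanSpace ℝ (Fin r))‖)) := by
      have : 0 < 1 - th := by linarith
      positivity
    exact div_pos h1 (by linarith)
  unfold pen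
  rw [div_self hp.ne', Real.log_one, norm_zero]
  ring

/-- converse direction: if `‖z‖₂ > Δ` then there exists `x ≠ 0` with
`F(x) < F(0)`, so `0` is not a global minimizer of the proximal objective. -/
theorem stmt_17 (r : ℕ) (hr : 1 ≤ r) (lam0 lam1 th : ℝ)
    (hlam1 : 0 < lam1) (hlam : lam1 < lam0) (hth0 : 0 < th) (hth1 : th < 1)
    (η : ℝ) (hη : 0 < η) (z : EuclideanSpace ℝ (Fin r))
    (hz : Delta r lam0 lam1 th η < ‖z‖) :
    ∃ x : EuclideanSpace ℝ (Fin r), x ≠ 0 ∧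
      Fobj r lam0 lam1 th η z x < Fobj r lam0 lam1 th η z 0 := by

  classical
  set P := pen r lam0 lam1 th with hP
  -- obtain a witness x0 ≠ 0 with value below ‖z‖
  have hS : ∃ x0 : EuclideanSpace ℝ (Fin r), x0 ≠ 0 ∧
      ‖x0‖ / 2 - η * P x0 / ‖x0‖ < ‖z‖ := by
    by_contra hcon
    push_neg at hcon
    have hwit : (EuclideanSpace.single (⟨0, hr⟩ : Fin r) (1:ℝ)) ≠ 0 := by
      intro h
      have := congrArg norm h
      rw [EuclideanSpace.norm_single, norm_zero] at this
      norm_num at this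
    have hle : ‖z‖ ≤ Delta r lam0 lam1 th η := by
      apply le_csInf
      · exact ⟨_, _, hwit, rfl⟩
      · rintro v ⟨x0, hx0, rfl⟩
        exact hcon x0 hx0
    linarith
  obtain ⟨x0, hx0, hv⟩ := hS
  have hn : 0 < ‖x0‖ := norm_pos_iff.mpr hx0
  set n := ‖x0‖ with hndef
  set Z := ‖z‖ with hZdef
  -- construct the aligned point x'
  obtain ⟨x', hx'norm, hx'dist⟩ :
      ∃ x' : EuclideanSpace ℝ (Fin r), ‖x'‖ = n ∧ ‖x' - z‖ ^ 2 = (n - Z) ^ 2 := by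
    by_cases hzz : z = 0
    · refine ⟨x0, rfl, ?_⟩
      rw [hzz, sub_zero]
      simp [hZdef, hzz]
      rfl
    · have hZ : 0 < Z := norm_pos_iff.mpr hzz
      refine ⟨(n / Z) • z, ?_, ?_⟩
      · rw [norm_smul, Real.norm_eq_abs, abs_of_nonneg (by positivity)]
        field_simp
        exact hZdef.symm
      · have : (n / Z) • z - z = (n / Z - 1) • z := by
          rw [sub_smul, one_smul]
        rw [this, norm_smul, Real.norm_eq_abs, mul_pow, sq_abs]
        field_simp
        rw [← hZdef]; ring
  have hx'ne : x' ≠ 0 := by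
    intro h
    rw [h, norm_zero] at hx'norm
    linarith
  refine ⟨x', hx'ne, ?_⟩
  have hpen' : P x' = P x0 := pen_congr r lam0 lam1 th hx'norm
  have hpen0 : P 0 = 0 := pen_zero r lam0 lam1 th hlam1 hlam hth0 hth1
  -- key algebraic inequality
  have key : n ^ 2 / 2 - η * P x0 < n * Z := by
    have e : (n / 2 - η * P x0 / n) * n = n ^ 2 / 2 - η * P x0 := by
      field_simp
    have := mul_lt_mul_of_pos_right hv hn
    rw [e] at this
    linarith
  have goal' : (n - Z) ^ 2 < Z ^ 2 + 2 * η * P x0 := by nlinarith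
  unfold Fobj
  rw [← hP, hpen', hpen0, zero_sub, norm_neg, ← hZdef, hx'dist, sub_zero]
  have hpos : 0 < 1 / (2 * η) := by positivity
  calc 1 / (2 * η) * (n - Z) ^ 2 - P x0
      < 1 / (2 * η) * (Z ^ 2 + 2 * η * P x0) - P x0 := by
        have := mul_lt_mul_of_pos_left goal' hpos
        linarith
    _ = 1 / (2 * η) * Z ^ 2 := by field_simp; ring
end
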